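/- arXiv:1303.0879 — 5 statements merged into one kernel-verified Lean document; each statement's English description precedes it below -/
import Mathlib

section
/- Let N ≥ 1 and let s₁, …, s_N be complex numbers such that |∏_{j=k}^N s_j| < 1 for every k ∈ {1, …, N}. Then for every m ∈ ℕ, the iterated series ∑_{α₁=m}^∞ s₁^{α₁} ∑_{α₂=α₁}^∞ s₂^{α₂} ⋯ ∑_{α_N=α_{N−1}}^∞ s_N^{α_N} (each inner sum converging absolutely) converges and equals (∏_{j=1}^N s_j)^m / ∏_{k=1}^N (1 − ∏_{j=k}^N s_j). -/
open scoped BigOperators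

/-- `IterHasSum [c₁, …, c_N] m a` says that the iterated series
`∑_{α₁=m}^∞ c₁^{α₁} ∑_{α₂=α₁}^∞ c₂^{α₂} ⋯ ∑_{α_N=α_{N-1}}^∞ c_N^{α_N}`,
summed inductively from the innermost tail outward with each tail converging,
converges with value `a`. -/
inductive IterHasSum : List ℂ → ℕ → ℂ → Prop
  | nil (m : ℕ) : IterHasSum [] m 1
  | cons (c : ℂ) (rest : List ℂ) (m : ℕ) (f : ℕ → ℂ) (a : ℂ)
      (hf : ∀ j : ℕ, IterHasSum rest j (f j))
      (ha : HasSum (fun j : ℕ => c ^ (m + j) * f (m + j)) a) :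
      IterHasSum (c :: rest) m a

/-!
Summing from the inside out, each inner series is geometric: if the tail starting at `s_{k+1}`
sums to `P^j / Q` with `P = ∏_{j>k} s_j`, then the next tail is
`∑_{j≥m} s_k^j P^j / Q = (s_k P)^m / ((1 - s_k P) Q)`, converging because `‖s_k P‖ < 1`.
-/

open Finset

theorem IterHasSum.cons_of_geometric {c P Q : ℂ} {rest : List ℂ}
    (h : ∀ j, IterHasSum rest j (P ^ j / Q)) (hc : ‖c * P‖ < 1) (m : ℕ) :
    IterHasSum (c :: rest) m ((c * P) ^ m / ((1 - c * P) * Q)) := by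
  refine .cons c rest m _ _ h ?_
  have hterm : (fun j => c ^ (m + j) * (P ^ (m + j) / Q)) =
      fun j => (c * P) ^ m * (c * P) ^ j / Q := by
    ext j
    ring
  rw [hterm, ← div_div, div_eq_mul_inv _ (1 - c * P)]
  exact ((hasSum_geometric_of_norm_lt_one hc).mul_left _).div_const Q

theorem iterHasSum_map_range'_Icc (s : ℕ → ℂ) (N k : ℕ)
    (hs : ∀ i ∈ Icc k N, ‖∏ j ∈ Icc i N, s j‖ < 1) (m : ℕ) :
    IterHasSum ((List.range' k (N + 1 - k)).map s) m
      ((∏ j ∈ Icc k N, s j) ^ m / ∏ i ∈ Icc k N, (1 - ∏ j ∈ Icc i N, s j)) := by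
  induction h : N + 1 - k generalizing k m with
  | zero =>
    have hempty : Icc k N = ∅ := Icc_eq_empty (by omega)
    simpa [hempty] using IterHasSum.nil m
  | succ n ih =>
    have hkN : k ≤ N := by omega
    have hsplit (f : ℕ → ℂ) : ∏ i ∈ Icc k N, f i = f k * ∏ i ∈ Icc (k + 1) N, f i := by
      rw [Icc_add_one_left_eq_Ioc, mul_prod_Ioc_eq_prod_Icc hkN]
    have htail (j : ℕ) :=
      ih (k + 1) (fun i hi => hs i (Icc_subset_Icc_left k.le_succ hi)) j (by omega)
    have hhead := hs k (left_mem_Icc.mpr hkN)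
    rw [hsplit s] at hhead
    rw [hsplit (fun i => 1 - ∏ j ∈ Icc i N, s j), hsplit s, List.range'_succ, List.map_cons]
    exact IterHasSum.cons_of_geometric htail hhead m

theorem iterated_geometric_sum_general (N : ℕ) (s : ℕ → ℂ)
    (hs : ∀ k, 1 ≤ k → k ≤ N → ‖∏ j ∈ Finset.Icc k N, s j‖ < 1) (m : ℕ) :
    IterHasSum ((List.range' 1 N).map s) m
      ((∏ j ∈ Finset.Icc 1 N, s j) ^ m /
        ∏ k ∈ Finset.Icc 1 N, (1 - ∏ j ∈ Finset.Icc k N, s j)) :=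
  iterHasSum_map_range'_Icc s N 1 (fun k hk => hs k (mem_Icc.mp hk).1 (mem_Icc.mp hk).2) m

theorem iterated_geometric_sum (N : ℕ) (hN : 1 ≤ N) (s : ℕ → ℂ)
    (hs : ∀ k, 1 ≤ k → k ≤ N → ‖∏ j ∈ Finset.Icc k N, s j‖ < 1) (m : ℕ) :
    IterHasSum ((List.range' 1 N).map s) m
      ((∏ j ∈ Finset.Icc 1 N, s j) ^ m /
        ∏ k ∈ Finset.Icc 1 N, (1 - ∏ j ∈ Finset.Icc k N, s j)) :=
  iterated_geometric_sum_general N s hs m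
end

section
/- Let s and b be real numbers with 0 < s < 1, 2s − 1 < b < 0, and D := (1−s)² + 4bs > 0. Define v₋ = (1 − s − √D)/(2b) and v₊ = (1 − s + √D)/(2b). Then v₋ and v₊ are the two (distinct, real) roots of the quadratic b v² + (s−1) v − s = 0, and |v₋| < 1 while |v₊| > 1; that is, v₋ is the only root lying inside the unit circle. -/
/-!
The quadratic `q v = b v² + (s - 1) v - s` opens downwards (`b < 0`) and satisfies
`q (-1) = b - (2s - 1) > 0` and `q 1 = b - 1 < 0`. Positivity at `-1` forces two real roots
with `-1` strictly between them, so `v₊ < -1 < v₋`; negativity at `1`, a point to the right of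
the vertex, puts `1` to the right of the larger root `v₋`.
-/

section DownwardParabola

variable {a b c r p : ℝ}

lemma discrim_eq_sq_sub_eval (a b c p : ℝ) :
    discrim a b c = (2 * a * p + b) ^ 2 - 4 * a * (a * (p * p) + b * p + c) := by
  unfold discrim; ring

lemma discrim_pos_of_neg_of_eval_pos (ha : a < 0) (hp : 0 < a * (p * p) + b * p + c) :
    0 < discrim a b c := by
  rw [discrim_eq_sq_sub_eval a b c p]
  nlinarith [sq_nonneg (2 * a * p + b)]

lemma roots_lt_lt_of_neg_of_eval_pos (ha : a < 0) (hp : 0 < a * (p * p) + b * p + c)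
    (hr : discrim a b c = r * r) (hr0 : 0 ≤ r) :
    (-b + r) / (2 * a) < p ∧ p < (-b - r) / (2 * a) := by
  have hsq : (2 * a * p + b) ^ 2 < r ^ 2 := by
    rw [sq r, ← hr, discrim_eq_sq_sub_eval a b c p]; nlinarith
  have habs : |2 * a * p + b| < r := abs_lt_of_sq_lt_sq hsq hr0
  have h2a : 2 * a < 0 := by linarith
  rw [div_lt_iff_of_neg h2a, lt_div_iff_of_neg h2a]
  constructor <;> linarith [neg_abs_le (2 * a * p + b), le_abs_self (2 * a * p + b)]

lemma root_lt_of_neg_of_eval_neg (ha : a < 0) (hp : a * (p * p) + b * p + c < 0)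
    (hvertex : 2 * a * p + b < 0) (hr : discrim a b c = r * r) :
    (-b - r) / (2 * a) < p := by
  have hsq : r ^ 2 < (2 * a * p + b) ^ 2 := by
    rw [sq r, ← hr, discrim_eq_sq_sub_eval a b c p]; nlinarith
  have hlt : r < -(2 * a * p + b) :=
    lt_of_pow_lt_pow_left₀ 2 (by linarith) (by rwa [neg_sq])
  rw [div_lt_iff_of_neg (by linarith)]
  linarith

end DownwardParabola

theorem quadratic_root_inside_unit_circle_general (s b : ℝ)
    (hb1 : 2 * s - 1 < b) (hb0 : b < 0) :
    (∀ v : ℝ, b * v ^ 2 + (s - 1) * v - s = 0 ↔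
      (v = (1 - s - Real.sqrt ((1 - s) ^ 2 + 4 * b * s)) / (2 * b) ∨
       v = (1 - s + Real.sqrt ((1 - s) ^ 2 + 4 * b * s)) / (2 * b))) ∧
    (1 - s - Real.sqrt ((1 - s) ^ 2 + 4 * b * s)) / (2 * b) ≠
      (1 - s + Real.sqrt ((1 - s) ^ 2 + 4 * b * s)) / (2 * b) ∧
    |(1 - s - Real.sqrt ((1 - s) ^ 2 + 4 * b * s)) / (2 * b)| < 1 ∧
    1 < |(1 - s + Real.sqrt ((1 - s) ^ 2 + 4 * b * s)) / (2 * b)| := by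
  have hq_neg_one : 0 < b * (-1 * -1) + (s - 1) * -1 + -s := by linarith
  have hq_one : b * (1 * 1) + (s - 1) * 1 + -s < 0 := by linarith
  have hdisc : discrim b (s - 1) (-s) = (1 - s) ^ 2 + 4 * b * s := by unfold discrim; ring
  have hD : 0 < (1 - s) ^ 2 + 4 * b * s := hdisc ▸ discrim_pos_of_neg_of_eval_pos hb0 hq_neg_one
  have hr : discrim b (s - 1) (-s) = √((1 - s) ^ 2 + 4 * b * s) * √((1 - s) ^ 2 + 4 * b * s) := by
    rw [hdisc, Real.mul_self_sqrt hD.le]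
  obtain ⟨hplus, hminus⟩ := roots_lt_lt_of_neg_of_eval_pos hb0 hq_neg_one hr (Real.sqrt_nonneg _)
  have hminus_lt_one := root_lt_of_neg_of_eval_neg hb0 hq_one (by linarith) hr
  rw [neg_sub] at hplus hminus hminus_lt_one
  refine ⟨fun v => ?_, (hplus.trans hminus).ne', abs_lt.2 ⟨hminus, hminus_lt_one⟩, ?_⟩
  · rw [show b * v ^ 2 + (s - 1) * v - s = b * (v * v) + (s - 1) * v + -s by ring,
      quadratic_eq_zero_iff hb0.ne hr, neg_sub, or_comm]
  · rw [abs_of_neg (by linarith)]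
    linarith

theorem quadratic_root_inside_unit_circle (s b : ℝ) (hs0 : 0 < s) (hs1 : s < 1)
    (hb1 : 2 * s - 1 < b) (hb0 : b < 0) (hD : 0 < (1 - s) ^ 2 + 4 * b * s) :
    (∀ v : ℝ, b * v ^ 2 + (s - 1) * v - s = 0 ↔
      (v = (1 - s - Real.sqrt ((1 - s) ^ 2 + 4 * b * s)) / (2 * b) ∨
       v = (1 - s + Real.sqrt ((1 - s) ^ 2 + 4 * b * s)) / (2 * b))) ∧
    (1 - s - Real.sqrt ((1 - s) ^ 2 + 4 * b * s)) / (2 * b) ≠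
      (1 - s + Real.sqrt ((1 - s) ^ 2 + 4 * b * s)) / (2 * b) ∧
    |(1 - s - Real.sqrt ((1 - s) ^ 2 + 4 * b * s)) / (2 * b)| < 1 ∧
    1 < |(1 - s + Real.sqrt ((1 - s) ^ 2 + 4 * b * s)) / (2 * b)| :=
  quadratic_root_inside_unit_circle_general s b hb1 hb0
end

section
/- Let a, t, u, s be real numbers, set b = a(1−t)(1−u), and assume s ≠ 0, b ≠ 0, b ≠ 1, and D := (1−s)² + 4bs > 0. Let v₋ = (1 − s − √D)/(2b). Then v₋ ≠ 1, 1 − b v₋ = (1 + s + √D)/2 ≠ 0, and (v₋/(v₋−1)) · (a t u)/(1 − b v₋) = a t u · [1 + (s + 2b) s − (1+s) √(s² − 2(1−2b)s + 1)] / (2 (1 − b)² s). (Here s² − 2(1−2b)s + 1 = (1−s)² + 4bs = D, so the square root is the same √D.) -/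
/-!
Write `R` for a square root of the discriminant `(1 - s)² + 4bs` and `v = (1 - s - R) / (2b)`.
Then `1 - b v = (1 + s + R) / 2` and `v / (v - 1) = (1 - s - R) / (1 - s - R - 2b)`, and the closed
form follows by clearing denominators and using `R² = (1 - s)² + 4bs` once. The excluded values
are exactly the degenerate ones: squaring `R = 1 - s - 2b` gives `b (b - 1) = 0`, and squaring
`R = -(1 + s)` gives `s (1 - b) = 0`.
-/

theorem one_sub_mul_sub_div_two_mul {b s R : ℝ} (hb0 : b ≠ 0) :
    1 - b * ((1 - s - R) / (2 * b)) = (1 + s + R) / 2 := by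
  field_simp
  ring

theorem sub_sub_sub_two_mul_ne_zero {b s R : ℝ} (hR : R ^ 2 = (1 - s) ^ 2 + 4 * b * s)
    (hb0 : b ≠ 0) (hb1 : b ≠ 1) : 1 - s - R - 2 * b ≠ 0 := by
  intro h
  have hb : b * (b - 1) = 0 := by
    rw [show R = 1 - s - 2 * b by linarith] at hR
    linear_combination hR / 4
  rcases mul_eq_zero.1 hb with h0 | h1
  · exact hb0 h0
  · exact hb1 (by linarith)

theorem sub_sub_div_two_mul_ne_one {b s R : ℝ} (hR : R ^ 2 = (1 - s) ^ 2 + 4 * b * s)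
    (hb0 : b ≠ 0) (hb1 : b ≠ 1) : (1 - s - R) / (2 * b) ≠ 1 := by
  rw [Ne, div_eq_one_iff_eq (by positivity)]
  exact sub_ne_zero.1 (sub_sub_sub_two_mul_ne_zero hR hb0 hb1)

theorem one_add_add_ne_zero {b s R : ℝ} (hR : R ^ 2 = (1 - s) ^ 2 + 4 * b * s)
    (hs : s ≠ 0) (hb1 : b ≠ 1) : 1 + s + R ≠ 0 := by
  intro h
  have hsb : s * (1 - b) = 0 := by
    rw [show R = -(1 + s) by linarith] at hR
    linear_combination hR / 4
  rcases mul_eq_zero.1 hsb with h0 | h1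
  · exact hs h0
  · exact hb1 (by linarith)

theorem div_sub_one_mul_div_one_sub_mul {b s R : ℝ} (hR : R ^ 2 = (1 - s) ^ 2 + 4 * b * s)
    (hs : s ≠ 0) (hb0 : b ≠ 0) (hb1 : b ≠ 1) (c : ℝ) :
    ((1 - s - R) / (2 * b)) / ((1 - s - R) / (2 * b) - 1) *
        (c / (1 - b * ((1 - s - R) / (2 * b)))) =
      c * (1 + (s + 2 * b) * s - (1 + s) * R) / (2 * (1 - b) ^ 2 * s) := by
  have hv : (1 - s - R) / (2 * b) - 1 = (1 - s - R - 2 * b) / (2 * b) := by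
    field_simp
  have hv1 := sub_sub_sub_two_mul_ne_zero hR hb0 hb1
  have hbv := one_add_add_ne_zero hR hs hb1
  have hb1' : 1 - b ≠ 0 := sub_ne_zero.2 (Ne.symm hb1)
  rw [hv, one_sub_mul_sub_div_two_mul hb0]
  field_simp
  linear_combination c * ((1 - 2 * s - s ^ 2 - 2 * b) - (1 + s) * R) * hR

theorem wtilde_closed_form_general (a t u s b : ℝ)
    (hs : s ≠ 0) (hb0 : b ≠ 0) (hb1 : b ≠ 1)
    (hD : 0 < (1 - s) ^ 2 + 4 * b * s) :
    (1 - s - Real.sqrt ((1 - s) ^ 2 + 4 * b * s)) / (2 * b) ≠ 1 ∧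
    1 - b * ((1 - s - Real.sqrt ((1 - s) ^ 2 + 4 * b * s)) / (2 * b)) =
      (1 + s + Real.sqrt ((1 - s) ^ 2 + 4 * b * s)) / 2 ∧
    (1 + s + Real.sqrt ((1 - s) ^ 2 + 4 * b * s)) / 2 ≠ 0 ∧
    (((1 - s - Real.sqrt ((1 - s) ^ 2 + 4 * b * s)) / (2 * b)) /
        (((1 - s - Real.sqrt ((1 - s) ^ 2 + 4 * b * s)) / (2 * b)) - 1)) *
      ((a * t * u) /
        (1 - b * ((1 - s - Real.sqrt ((1 - s) ^ 2 + 4 * b * s)) / (2 * b)))) =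
      a * t * u *
        (1 + (s + 2 * b) * s -
          (1 + s) * Real.sqrt (s ^ 2 - 2 * (1 - 2 * b) * s + 1)) /
        (2 * (1 - b) ^ 2 * s) := by
  have hR := Real.sq_sqrt hD.le
  rw [show s ^ 2 - 2 * (1 - 2 * b) * s + 1 = (1 - s) ^ 2 + 4 * b * s by ring]
  exact ⟨sub_sub_div_two_mul_ne_one hR hb0 hb1, one_sub_mul_sub_div_two_mul hb0,
    div_ne_zero (one_add_add_ne_zero hR hs hb1) two_ne_zero,
    div_sub_one_mul_div_one_sub_mul hR hs hb0 hb1 (a * t * u)⟩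

theorem wtilde_closed_form (a t u s b : ℝ) (hb : b = a * (1 - t) * (1 - u))
    (hs : s ≠ 0) (hb0 : b ≠ 0) (hb1 : b ≠ 1)
    (hD : 0 < (1 - s) ^ 2 + 4 * b * s) :
    (1 - s - Real.sqrt ((1 - s) ^ 2 + 4 * b * s)) / (2 * b) ≠ 1 ∧
    1 - b * ((1 - s - Real.sqrt ((1 - s) ^ 2 + 4 * b * s)) / (2 * b)) =
      (1 + s + Real.sqrt ((1 - s) ^ 2 + 4 * b * s)) / 2 ∧
    (1 + s + Real.sqrt ((1 - s) ^ 2 + 4 * b * s)) / 2 ≠ 0 ∧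
    (((1 - s - Real.sqrt ((1 - s) ^ 2 + 4 * b * s)) / (2 * b)) /
        (((1 - s - Real.sqrt ((1 - s) ^ 2 + 4 * b * s)) / (2 * b)) - 1)) *
      ((a * t * u) /
        (1 - b * ((1 - s - Real.sqrt ((1 - s) ^ 2 + 4 * b * s)) / (2 * b)))) =
      a * t * u *
        (1 + (s + 2 * b) * s -
          (1 + s) * Real.sqrt (s ^ 2 - 2 * (1 - 2 * b) * s + 1)) /
        (2 * (1 - b) ^ 2 * s) :=
  wtilde_closed_form_general a t u s b hs hb0 hb1 hD
end

section
/- Let s and b be real numbers with 0 < s < 1, −1 < b < 0, 2s − 1 < b, and D := (1−s)² + 4bs > 0, and let c be a real number. Let v₋ = (1 − s − √D)/(2b). Then 1 − b v₋ = (1 + s + √D)/2 > 0 and (1/(2πi)) ∮_{|v|=1} (1 − bv)^{−c} / (b v² + (s−1) v − s) dv = −(1 − b v₋)^{−c} / √D, where (1 − bv)^{−c} is the principal branch of the complex power (well defined and holomorphic on the closed unit disk since Re(1 − bv) > 0 there), and the integral is the counterclockwise contour integral over the unit circle. -/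
/-!
The quadratic factors as `b (v - v₋) (v - v₊)`. From `2s - 1 < b < 0 < s` one gets
`|1 - s + 2b| < √D < 1 - s`, which puts `v₋` inside and `v₊` outside the unit disk, and
`|b| < 1` keeps `1 - b v` in the right half-plane on the closed disk, so `(1 - b v)^(-c)` is
holomorphic there. Cauchy's integral formula for `(1 - b v)^(-c) / (b (v - v₊))` at `v₋`
gives the value, since `b (v₋ - v₊) = -√D`.
-/

open Complex Metric Real

theorem quadratic_eq_mul_sub_mul_sub {K : Type*} [Field K] [NeZero (2 : K)] {a β γ d : K}
    (ha : a ≠ 0) (hd : d ^ 2 = discrim a β γ) (v : K) :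
    a * v ^ 2 + β * v + γ = a * (v - (-β - d) / (2 * a)) * (v - (-β + d) / (2 * a)) := by
  rw [discrim] at hd
  field_simp
  linear_combination hd

theorem two_pi_I_inv_mul_circleIntegral_div_mul_sub_mul_sub {c a p k : ℂ} {R : ℝ}
    {f : ℂ → ℂ} (hf : DifferentiableOn ℂ f (closedBall c R)) (ha : a ∈ ball c R) (hp : p ∉ closedBall c R)
    (hk : k ≠ 0) :
    (2 * π * I)⁻¹ * ∮ v in C(c, R), f v / (k * (v - a) * (v - p)) = f a / (k * (a - p)) := by
  have hg : DifferentiableOn ℂ (fun v => f v / (k * (v - p))) (closedBall c R) :=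
    hf.div (by fun_prop) fun v hv =>
      mul_ne_zero hk (sub_ne_zero.2 (ne_of_mem_of_not_mem hv hp))
  have hsplit : (fun v => f v / (k * (v - a) * (v - p))) =
      fun v => (v - a)⁻¹ • (f v / (k * (v - p))) := by
    funext v; simp only [smul_eq_mul, div_eq_mul_inv, mul_inv]; ring
  rw [hsplit]
  exact (hg.mono closure_ball_subset_closedBall).diffContOnCl
    |>.two_pi_i_inv_smul_circleIntegral_sub_inv_smul ha

theorem differentiableOn_one_sub_mul_cpow {b : ℂ} (hb : ‖b‖ < 1) (w : ℂ) :
    DifferentiableOn ℂ (fun v => (1 - b * v) ^ w) (closedBall 0 1) := by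
  intro v hv
  have hbv : ‖-(b * v)‖ < 1 := by
    rw [norm_neg, norm_mul]
    exact (mul_le_of_le_one_right (norm_nonneg b) (by simpa using hv)).trans_lt hb
  have hslit : 1 - b * v ∈ slitPlane := by
    simpa [sub_eq_add_neg] using mem_slitPlane_of_norm_lt_one hbv
  exact (DifferentiableAt.cpow_const (f := fun v => 1 - b * v) (by fun_prop) hslit)
    |>.differentiableWithinAt

section RootLocation

variable {s b d : ℝ}

-- `(1 - s) ^ 2 + 4 b s - (1 - s + 2 b) ^ 2 = 4 b (2 s - 1 - b)`
theorem sq_lt_discr (hb : b < 0) (hbs : 2 * s - 1 < b) :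
    (1 - s + 2 * b) ^ 2 < (1 - s) ^ 2 + 4 * b * s := by
  nlinarith

theorem discr_lt_sq (hs : 0 < s) (hb : b < 0) : (1 - s) ^ 2 + 4 * b * s < (1 - s) ^ 2 := by
  nlinarith

theorem abs_one_sub_add_two_mul_lt (hb : b < 0) (hbs : 2 * s - 1 < b)
    (hd : d ^ 2 = (1 - s) ^ 2 + 4 * b * s) (hd0 : 0 ≤ d) : |1 - s + 2 * b| < d :=
  abs_lt_of_sq_lt_sq (hd ▸ sq_lt_discr hb hbs) hd0

theorem abs_root_sub_lt_one (hs : 0 < s) (hb : b < 0) (hbs : 2 * s - 1 < b)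
    (hd : d ^ 2 = (1 - s) ^ 2 + 4 * b * s) (hd0 : 0 ≤ d) : |(1 - s - d) / (2 * b)| < 1 := by
  have hsmall : d < 1 - s := lt_of_pow_lt_pow_left₀ 2 (by linarith) (hd ▸ discr_lt_sq hs hb)
  rw [abs_div, abs_of_pos (by linarith), abs_of_neg (by linarith), div_lt_one (by linarith)]
  linarith [(abs_lt.1 (abs_one_sub_add_two_mul_lt hb hbs hd hd0)).2]

theorem one_lt_abs_root_add (hb : b < 0) (hbs : 2 * s - 1 < b)
    (hd : d ^ 2 = (1 - s) ^ 2 + 4 * b * s) (hd0 : 0 ≤ d) : 1 < |(1 - s + d) / (2 * b)| := by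
  rw [abs_div, abs_of_pos (by linarith), abs_of_neg (by linarith), one_lt_div (by linarith)]
  linarith [(abs_lt.1 (abs_one_sub_add_two_mul_lt hb hbs hd hd0)).1]

end RootLocation

theorem ofReal_quadratic_eq_mul_sub_mul_sub {s b d : ℝ} (hb : b ≠ 0)
    (hd : d ^ 2 = (1 - s) ^ 2 + 4 * b * s) (v : ℂ) :
    (b : ℂ) * v ^ 2 + (s - 1) * v - s =
      b * (v - ↑((1 - s - d) / (2 * b))) * (v - ↑((1 - s + d) / (2 * b))) := by
  have hdC : (d : ℂ) ^ 2 = discrim (b : ℂ) (s - 1) (-s) := by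
    rw [discrim]; exact_mod_cast congrArg ofReal (hd.trans (by ring))
  rw [sub_eq_add_neg _ (s : ℂ), quadratic_eq_mul_sub_mul_sub (ofReal_ne_zero.2 hb) hdC]
  push_cast; ring

theorem contour_integral_power_over_quadratic_general (s b c : ℝ) (hs0 : 0 < s)
    (hb0 : b < 0) (hb2s : 2 * s - 1 < b) :
    1 - b * ((1 - s - Real.sqrt ((1 - s) ^ 2 + 4 * b * s)) / (2 * b)) =
      (1 + s + Real.sqrt ((1 - s) ^ 2 + 4 * b * s)) / 2 ∧
    0 < (1 + s + Real.sqrt ((1 - s) ^ 2 + 4 * b * s)) / 2 ∧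
    (2 * (Real.pi : ℂ) * Complex.I)⁻¹ *
        (∮ v in C(0, 1),
          (1 - (b : ℂ) * v) ^ (-(c : ℂ)) /
            ((b : ℂ) * v ^ 2 + ((s : ℂ) - 1) * v - (s : ℂ))) =
      (((-((1 - b * ((1 - s - Real.sqrt ((1 - s) ^ 2 + 4 * b * s)) / (2 * b))) ^ (-c)) /
          Real.sqrt ((1 - s) ^ 2 + 4 * b * s) : ℝ)) : ℂ) := by
  have hD : 0 < (1 - s) ^ 2 + 4 * b * s := (sq_nonneg _).trans_lt (sq_lt_discr hb0 hb2s)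
  set d := √((1 - s) ^ 2 + 4 * b * s)
  have hd : d ^ 2 = (1 - s) ^ 2 + 4 * b * s := sq_sqrt hD.le
  have hd0 : 0 ≤ d := sqrt_nonneg _
  have hbase : 1 - b * ((1 - s - d) / (2 * b)) = (1 + s + d) / 2 := by
    field_simp [hb0.ne]; ring
  refine ⟨hbase, by positivity, ?_⟩
  have hvm : (↑((1 - s - d) / (2 * b)) : ℂ) ∈ ball 0 1 := by
    rw [mem_ball_zero_iff, norm_real, norm_eq_abs]
    exact abs_root_sub_lt_one hs0 hb0 hb2s hd hd0
  have hvp : (↑((1 - s + d) / (2 * b)) : ℂ) ∉ closedBall 0 1 := by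
    rw [mem_closedBall_zero_iff, norm_real, norm_eq_abs, not_le]
    exact one_lt_abs_root_add hb0 hb2s hd hd0
  have hb1 : ‖(b : ℂ)‖ < 1 := by rw [norm_real, norm_eq_abs, abs_of_neg hb0]; linarith
  simp_rw [ofReal_quadratic_eq_mul_sub_mul_sub hb0.ne hd]
  rw [two_pi_I_inv_mul_circleIntegral_div_mul_sub_mul_sub
    (differentiableOn_one_sub_mul_cpow hb1 _) hvm hvp (ofReal_ne_zero.2 hb0.ne)]
  have hgap : b * ((1 - s - d) / (2 * b) - (1 - s + d) / (2 * b)) = -d := by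
    field_simp [hb0.ne]; ring
  rw [← ofReal_one, ← ofReal_mul, ← ofReal_sub, hbase, ← ofReal_sub, ← ofReal_mul, hgap,
    ← ofReal_neg c, ← ofReal_cpow (by positivity)]
  push_cast; ring

theorem contour_integral_power_over_quadratic (s b c : ℝ) (hs0 : 0 < s) (hs1 : s < 1)
    (hbm1 : -1 < b) (hb0 : b < 0) (hb2s : 2 * s - 1 < b)
    (hD : 0 < (1 - s) ^ 2 + 4 * b * s) :
    1 - b * ((1 - s - Real.sqrt ((1 - s) ^ 2 + 4 * b * s)) / (2 * b)) =
      (1 + s + Real.sqrt ((1 - s) ^ 2 + 4 * b * s)) / 2 ∧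
    0 < (1 + s + Real.sqrt ((1 - s) ^ 2 + 4 * b * s)) / 2 ∧
    (2 * (Real.pi : ℂ) * Complex.I)⁻¹ *
        (∮ v in C(0, 1),
          (1 - (b : ℂ) * v) ^ (-(c : ℂ)) /
            ((b : ℂ) * v ^ 2 + ((s : ℂ) - 1) * v - (s : ℂ))) =
      (((-((1 - b * ((1 - s - Real.sqrt ((1 - s) ^ 2 + 4 * b * s)) / (2 * b))) ^ (-c)) /
          Real.sqrt ((1 - s) ^ 2 + 4 * b * s) : ℝ)) : ℂ) :=
  contour_integral_power_over_quadratic_general s b c hs0 hb0 hb2s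
end

section
/- Let b and s be real numbers with −1 < b ≤ 0 and 0 < s < (1+b)/2, and let v be a complex number with |v| = 1. Then 1 − bv ≠ 0 and |s(v−1) / (v(1−bv))| < 1. -/
namespace Complex

lemma norm_sub_one_le_two {v : ℂ} (hv : ‖v‖ = 1) : ‖v - 1‖ ≤ 2 := by
  have h := norm_sub_le v 1
  rw [hv, norm_one] at h
  linarith

lemma norm_ofReal_mul_sub_one_le {s : ℝ} (hs : 0 ≤ s) {v : ℂ} (hv : ‖v‖ = 1) :
    ‖(s : ℂ) * (v - 1)‖ ≤ 2 * s := by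
  rw [norm_mul, norm_real, Real.norm_of_nonneg hs, mul_comm]
  exact mul_le_mul_of_nonneg_right (norm_sub_one_le_two hv) hs

lemma one_add_le_norm_one_sub_ofReal_mul {b : ℝ} (hb : b ≤ 0) {v : ℂ} (hv : ‖v‖ = 1) :
    1 + b ≤ ‖1 - (b : ℂ) * v‖ := by
  have h := norm_sub_norm_le (1 : ℂ) ((b : ℂ) * v)
  rw [norm_one, norm_mul, norm_real, hv, mul_one, Real.norm_eq_abs, abs_of_nonpos hb] at h
  linarith

end Complex

theorem ratio_bound_on_unit_circle_general (b s : ℝ) (v : ℂ) (hb0 : b ≤ 0)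
    (hs0 : 0 < s) (hs1 : s < (1 + b) / 2) (hv : ‖v‖ = 1) :
    1 - (b : ℂ) * v ≠ 0 ∧ ‖(s : ℂ) * (v - 1) / (v * (1 - (b : ℂ) * v))‖ < 1 := by
  have hden := Complex.one_add_le_norm_one_sub_ofReal_mul hb0 hv
  have hden_pos : 0 < ‖1 - (b : ℂ) * v‖ := by linarith
  refine ⟨norm_pos_iff.mp hden_pos, ?_⟩
  rw [norm_div, norm_mul v, hv, one_mul, div_lt_one hden_pos]
  calc ‖(s : ℂ) * (v - 1)‖ ≤ 2 * s := Complex.norm_ofReal_mul_sub_one_le hs0.le hv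
    _ < 1 + b := by linarith
    _ ≤ ‖1 - (b : ℂ) * v‖ := hden

theorem ratio_bound_on_unit_circle (b s : ℝ) (v : ℂ) (hbm1 : -1 < b) (hb0 : b ≤ 0)
    (hs0 : 0 < s) (hs1 : s < (1 + b) / 2) (hv : ‖v‖ = 1) :
    1 - (b : ℂ) * v ≠ 0 ∧ ‖(s : ℂ) * (v - 1) / (v * (1 - (b : ℂ) * v))‖ < 1 :=
  ratio_bound_on_unit_circle_general b s v hb0 hs0 hs1 hv
end
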